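/- Let ψ = √((1+r)/2)·e₁ ⊗ e₁ + √((1−r)/2)·e₂ ⊗ e₂ with r ∈ [0,1], and let z = |θφ⟩ = (cos(θ/2)e^{-iφ/2}, sin(θ/2)e^{iφ/2}). Then ‖F₁₂(ψ)(z)‖² = (1 + r·cosθ)/2. In particular, orthogonal unit vectors z = |θφ⟩ and z' = |π−θ, φ+π⟩ with θ ∉ {0,π} are mapped by F₁₂(ψ) to orthogonal vectors if and only if r = 0. -/

import Mathlib

/-!
`F₁₂(ψ)` multiplies the conjugated coordinates by `√((1 ± r)/2)`, so
`⟪F₁₂ z, F₁₂ w⟫ = (1 + r)/2 · z₀ w̄₀ + (1 - r)/2 · z₁ w̄₁`. The coordinates of `|θφ⟩` have moduli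
`|cos (θ/2)|` and `|sin (θ/2)|`, which gives the norm. For the pair `|θφ⟩`, `|π - θ, φ + π⟩` the
two terms carry the phases `i` and `-i`, so the inner product is `i r sin θ / 2`, which vanishes on
`0 < θ < π` only for `r = 0`.
-/

open Complex
open scoped InnerProductSpace

abbrev Qubit := EuclideanSpace ℂ (Fin 2)

noncomputable def ket (θ φ : ℝ) : Qubit :=
  WithLp.toLp 2 ![Real.cos (θ/2) * Complex.exp (-Complex.I * (φ/2)),
    Real.sin (θ/2) * Complex.exp (Complex.I * (φ/2))]

/-- The constraint function `F₁₂(ψ)` of the Schmidt-diagonal state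
`ψ = √((1+r)/2) e₁⊗e₁ + √((1−r)/2) e₂⊗e₂` (in the standard basis). -/
noncomputable def F12schmidt (r : ℝ) (z : Qubit) : Qubit :=
  WithLp.toLp 2 ![(Real.sqrt ((1 + r) / 2) : ℂ) * starRingEnd ℂ (z 0),
    (Real.sqrt ((1 - r) / 2) : ℂ) * starRingEnd ℂ (z 1)]

open scoped ComplexConjugate

theorem inner_F12schmidt {r : ℝ} (hr : r ∈ Set.Icc (-1 : ℝ) 1) (z w : Qubit) :
    ⟪F12schmidt r z, F12schmidt r w⟫_ℂ =
      ((1 + r) / 2 : ℝ) * (z 0 * conj (w 0)) + ((1 - r) / 2 : ℝ) * (z 1 * conj (w 1)) := by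
  obtain ⟨hr₀, hr₁⟩ := hr
  have hp : (√((1 + r) / 2) : ℂ) * √((1 + r) / 2) = ((1 + r) / 2 : ℝ) := by
    exact_mod_cast Real.mul_self_sqrt (by linarith)
  have hm : (√((1 - r) / 2) : ℂ) * √((1 - r) / 2) = ((1 - r) / 2 : ℝ) := by
    exact_mod_cast Real.mul_self_sqrt (by linarith)
  simp only [F12schmidt, PiLp.inner_apply, RCLike.inner_apply, Fin.sum_univ_two,
    Matrix.cons_val_zero, Matrix.cons_val_one, map_mul, conj_conj, conj_ofReal]
  linear_combination (z 0 * conj (w 0)) * hp + (z 1 * conj (w 1)) * hm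

theorem norm_sq_F12schmidt {r : ℝ} (hr : r ∈ Set.Icc (-1 : ℝ) 1) (z : Qubit) :
    ‖F12schmidt r z‖ ^ 2 = (1 + r) / 2 * ‖z 0‖ ^ 2 + (1 - r) / 2 * ‖z 1‖ ^ 2 := by
  rw [← inner_self_eq_norm_sq (𝕜 := ℂ), inner_F12schmidt hr]
  simp [mul_conj', ← ofReal_pow]

theorem norm_ket_zero (θ φ : ℝ) : ‖ket θ φ 0‖ = |Real.cos (θ / 2)| := by
  simp only [ket, PiLp.toLp_apply, Matrix.cons_val_zero, norm_mul, norm_real, Real.norm_eq_abs,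
    norm_exp]
  simp

theorem norm_ket_one (θ φ : ℝ) : ‖ket θ φ 1‖ = |Real.sin (θ / 2)| := by
  simp only [ket, PiLp.toLp_apply, Matrix.cons_val_one, Matrix.cons_val_zero, norm_mul, norm_real,
    Real.norm_eq_abs, norm_exp]
  simp

theorem ket_pi_sub_add_pi (θ φ : ℝ) :
    ket (Real.pi - θ) (φ + Real.pi) =
      !₂[-I * Real.sin (θ / 2) * exp (-I * (φ / 2)), I * Real.cos (θ / 2) * exp (I * (φ / 2))] := by
  have hcos : Real.cos ((Real.pi - θ) / 2) = Real.sin (θ / 2) := by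
    rw [sub_div, Real.cos_pi_div_two_sub]
  have hsin : Real.sin ((Real.pi - θ) / 2) = Real.cos (θ / 2) := by
    rw [sub_div, Real.sin_pi_div_two_sub]
  have em : exp (-I * ((φ + Real.pi : ℝ) / 2)) = -I * exp (-I * (φ / 2)) := by
    rw [show -I * ((φ + Real.pi : ℝ) / 2) = -Real.pi / 2 * I + -I * (φ / 2) by push_cast; ring,
      exp_add, exp_neg_pi_div_two_mul_I]
  have ep : exp (I * ((φ + Real.pi : ℝ) / 2)) = I * exp (I * (φ / 2)) := by
    rw [show I * ((φ + Real.pi : ℝ) / 2) = Real.pi / 2 * I + I * (φ / 2) by push_cast; ring,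
      exp_add, exp_pi_div_two_mul_I]
  simp only [ket, hcos, hsin, em, ep]
  ring_nf

theorem exp_mul_conj_exp_of_re_eq_zero {z : ℂ} (hz : z.re = 0) : exp z * conj (exp z) = 1 := by
  rw [mul_conj', norm_exp, hz]
  simp

theorem inner_F12schmidt_ket_pi_sub_add_pi {r : ℝ} (hr : r ∈ Set.Icc (-1 : ℝ) 1) (θ φ : ℝ) :
    ⟪F12schmidt r (ket θ φ), F12schmidt r (ket (Real.pi - θ) (φ + Real.pi))⟫_ℂ =
      I * (r * Real.sin θ / 2 : ℝ) := by
  have hneg := exp_mul_conj_exp_of_re_eq_zero (z := -I * (φ / 2)) (by simp)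
  have hpos := exp_mul_conj_exp_of_re_eq_zero (z := I * (φ / 2)) (by simp)
  have hsin : Real.sin θ = 2 * Real.sin (θ / 2) * Real.cos (θ / 2) := by
    rw [← Real.sin_two_mul, mul_div_cancel₀ θ two_ne_zero]
  rw [inner_F12schmidt hr, ket_pi_sub_add_pi, ket, hsin]
  simp only [Matrix.cons_val_zero, Matrix.cons_val_one, map_mul, map_neg, conj_I, conj_ofReal]
  push_cast
  linear_combination (I * (1 + r) / 2 * Complex.cos (θ / 2) * Complex.sin (θ / 2)) * hneg
    - (I * (1 - r) / 2 * Complex.cos (θ / 2) * Complex.sin (θ / 2)) * hpos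

theorem F12_norm_and_orthogonality (r θ φ : ℝ) (hr : r ∈ Set.Icc (0:ℝ) 1) :
    ‖F12schmidt r (ket θ φ)‖ ^ 2 = (1 + r * Real.cos θ) / 2 ∧
    (θ ∈ Set.Ioo 0 Real.pi →
      (⟪F12schmidt r (ket θ φ), F12schmidt r (ket (Real.pi - θ) (φ + Real.pi))⟫_ℂ = 0 ↔ r = 0)) := by
  have hr' : r ∈ Set.Icc (-1 : ℝ) 1 := ⟨by linarith [hr.1], hr.2⟩
  refine ⟨?_, fun hθ => ?_⟩
  · rw [norm_sq_F12schmidt hr', norm_ket_zero, norm_ket_one, sq_abs, sq_abs]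
    have hcos : Real.cos θ = Real.cos (θ / 2) ^ 2 - Real.sin (θ / 2) ^ 2 := by
      rw [← Real.cos_two_mul', mul_div_cancel₀ θ two_ne_zero]
    linear_combination (1 / 2 : ℝ) * Real.sin_sq_add_cos_sq (θ / 2) - (r / 2) * hcos
  · obtain ⟨hθ₀, hθπ⟩ := hθ
    have hsin : Real.sin θ ≠ 0 := (Real.sin_pos_of_pos_of_lt_pi hθ₀ hθπ).ne'
    rw [inner_F12schmidt_ket_pi_sub_add_pi hr', mul_eq_zero, ofReal_eq_zero]
    simp [I_ne_zero, hsin]
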